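/- For any partition ν contained in Box_{k,n} with at most k parts and any row index i ≤ k, one can add a rim hook of size n to ν whose Southwestern-most box lies weakly below row i, producing a partition μ with μ_1 > n−k; in particular, every rim hook of size n−r removed from a partition λ ⊆ Box_{k,n} extends (rightward) to a rim hook of size n. -/

import Mathlib

/-!
Attach to `ν` the border strip that starts at the end `(t, ν_t)` of row `t` and climbs along the
rim: in row `a + 1 ≤ t` it fills the columns `ν_{a+1}, …, ν_a`, and in row `0` it runs to the right
until it has `n` boxes. Consecutive rows overlap in exactly one column, so this is a rim hook, and
since `ν_0 ≤ n - k < n - t` its first row ends beyond column `n - k`. For the second statement,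
let `t` be the lowest row of the rim hook `λ / ν`: having no `2 × 2` square means
`λ_{a+1} ≤ ν_a + 1`, which says exactly that `λ / ν` lies inside the strip attached at row `t`.
-/

open MvPolynomial


theorem sorted_replicate_ge (m c : ℕ) : (List.replicate m c).SortedGE := by
  rw [List.sortedGE_iff_pairwise]
  induction m with
  | zero => simp
  | succ n ih =>
    rw [List.replicate_succ, List.pairwise_cons]
    exact ⟨fun b hb => (List.eq_of_mem_replicate hb).le, ih⟩

/-- `h_m` with integer index: zero for negative `m`. -/
noncomputable def hpoly (N : ℕ) (m : ℤ) : MvPolynomial (Fin N) ℚ :=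
  if 0 ≤ m then hsymm (Fin N) ℚ m.toNat else 0

/-- The Schur polynomial in `N` variables of a partition (Young diagram), via
the Jacobi–Trudi determinant `det (h_{λ_i + j - i})`. -/
noncomputable def schur (N : ℕ) (μ : YoungDiagram) : MvPolynomial (Fin N) ℚ :=
  Matrix.det (Matrix.of fun i j : Fin μ.rowLens.length =>
    hpoly N ((μ.rowLens.get i : ℤ) + (j : ℤ) - (i : ℤ)))

/-- The hook partition `(b, 1^(a-1))` (with `a` rows; intended for `a, b ≥ 1`). -/
def hookDiagram (a b : ℕ) : YoungDiagram :=
  YoungDiagram.ofRowLens (max b 1 :: List.replicate (a - 1) 1) (by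
    rw [List.sortedGE_iff_pairwise]
    simp only [List.pairwise_cons]
    refine ⟨fun x hx => ?_, List.sortedGE_iff_pairwise.mp (sorted_replicate_ge ..)⟩
    rw [List.eq_of_mem_replicate hx]
    omega)

/-- The cells of the skew shape `μ / λ`. -/
def skewCells (lam mu : YoungDiagram) : Finset (ℕ × ℕ) := mu.cells \ lam.cells

/-- Two boxes are (edgewise) adjacent. -/
def Adj (c d : ℕ × ℕ) : Prop :=
  (c.1 = d.1 ∧ (c.2 = d.2 + 1 ∨ d.2 = c.2 + 1)) ∨
  (c.2 = d.2 ∧ (c.1 = d.1 + 1 ∨ d.1 = c.1 + 1))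

/-- A set of boxes is edgewise connected. -/
def IsConnectedCells (s : Finset (ℕ × ℕ)) : Prop :=
  ∀ c ∈ s, ∀ d ∈ s, Relation.ReflTransGen (fun x y => x ∈ s ∧ y ∈ s ∧ Adj x y) c d

/-- A set of boxes contains no 2×2 square. -/
def NoSquare (s : Finset (ℕ × ℕ)) : Prop :=
  ¬∃ i j : ℕ, (i, j) ∈ s ∧ (i + 1, j) ∈ s ∧ (i, j + 1) ∈ s ∧ (i + 1, j + 1) ∈ s

/-- `μ / λ` is a rim hook (border strip): nonempty, connected, no 2×2 square. -/
def IsRimHook (lam mu : YoungDiagram) : Prop :=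
  lam ≤ mu ∧ (skewCells lam mu).Nonempty ∧ IsConnectedCells (skewCells lam mu) ∧
    NoSquare (skewCells lam mu)

/-- The number of boxes of the skew shape `μ / λ`. -/
def skewSize (lam mu : YoungDiagram) : ℕ := (skewCells lam mu).card

/-- The height (number of nonempty rows) of the skew shape `μ / λ`. -/
def skewHt (lam mu : YoungDiagram) : ℕ := ((skewCells lam mu).image Prod.fst).card

/-- The `k × (n-k)` rectangle partition `Box_{k,n}`. -/
def box (k n : ℕ) : YoungDiagram :=
  YoungDiagram.ofRowLens (List.replicate k (n - k)) (sorted_replicate_ge ..)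

/-- The diagonal `j - i` of a box `(i, j)`. -/
def diagOf (c : ℕ × ℕ) : ℤ := (c.2 : ℤ) - (c.1 : ℤ)

namespace YoungDiagram

def ofAntitone (k : ℕ) (f : ℕ → ℕ) (hf : Antitone f) : YoungDiagram :=
  ofRowLens (List.ofFn fun i : Fin k => f i)
    (List.sortedGE_iff_pairwise.mpr (List.pairwise_ofFn.mpr fun _ _ hij => hf hij.le))

theorem mem_ofAntitone {k : ℕ} {f : ℕ → ℕ} {hf : Antitone f} {a b : ℕ} :
    (a, b) ∈ ofAntitone k f hf ↔ a < k ∧ b < f a := by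
  simp [ofAntitone, mem_ofRowLens]

end YoungDiagram

open YoungDiagram

theorem mem_box {k n : ℕ} {c : ℕ × ℕ} : c ∈ box k n ↔ c.1 < k ∧ c.2 < n - k := by
  simp [box, mem_ofRowLens]

theorem rowLen_le_of_le_box {k n : ℕ} {nu : YoungDiagram} (hnu : nu ≤ box k n) (a : ℕ) :
    nu.rowLen a ≤ n - k := by
  by_contra! h
  exact (mem_box.1 (hnu (mem_iff_lt_rowLen.2 h))).2.false

theorem mem_skewCells {lam mu : YoungDiagram} {c : ℕ × ℕ} :
    c ∈ skewCells lam mu ↔ c ∈ mu ∧ c ∉ lam := by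
  simp [skewCells]

theorem skewCells_subset_skewCells {nu lam mu : YoungDiagram} (h : lam ≤ mu) :
    skewCells nu lam ⊆ skewCells nu mu :=
  Finset.sdiff_subset_sdiff (cells_subset_iff.2 h) subset_rfl

theorem rowLen_succ_le_of_noSquare {nu lam : YoungDiagram}
    (hsq : NoSquare (skewCells nu lam)) (a : ℕ) : lam.rowLen (a + 1) ≤ nu.rowLen a + 1 := by
  by_contra! h
  have hlam := lam.rowLen_anti a (a + 1) a.le_succ
  have hnu := nu.rowLen_anti a (a + 1) a.le_succ
  refine hsq ⟨a, nu.rowLen a, ?_, ?_, ?_, ?_⟩ <;>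
    simp only [mem_skewCells, mem_iff_lt_rowLen] <;> omega

section Connectivity

theorem Adj.symm {c d : ℕ × ℕ} (h : Adj c d) : Adj d c := by
  unfold Adj at *; omega

def AdjIn (s : Finset (ℕ × ℕ)) (x y : ℕ × ℕ) : Prop := x ∈ s ∧ y ∈ s ∧ Adj x y

variable {s : Finset (ℕ × ℕ)}

instance : Std.Symm (AdjIn s) := ⟨fun _ _ ⟨hx, hy, h⟩ => ⟨hy, hx, h.symm⟩⟩

theorem isConnectedCells_of_forall_reach (c₀ : ℕ × ℕ)
    (h : ∀ c ∈ s, Relation.ReflTransGen (AdjIn s) c c₀) : IsConnectedCells s :=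
  fun c hc d hd => (h c hc).trans (symm (h d hd))

theorem reach_of_row_mem {a b b' : ℕ} (hbb' : b ≤ b') (h : ∀ j, b ≤ j → j ≤ b' → (a, j) ∈ s) :
    Relation.ReflTransGen (AdjIn s) (a, b') (a, b) := by
  induction b', hbb' using Nat.le_induction with
  | base => rfl
  | succ b' hbb' ih =>
    refine Relation.ReflTransGen.head ⟨h _ (by omega) le_rfl, h _ hbb' b'.le_succ, ?_⟩
      (ih fun j hj hj' => h j hj (by omega))
    exact Or.inl ⟨rfl, Or.inl rfl⟩

end Connectivity

theorem card_eq_sum_of_mem_iff {s : Finset (ℕ × ℕ)} {T : ℕ} {l m : ℕ → ℕ}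
    (hs : ∀ a b, (a, b) ∈ s ↔ a < T ∧ l a ≤ b ∧ b < m a) :
    s.card = ∑ a ∈ Finset.range T, (m a - l a) := by
  have : s = (Finset.range T).biUnion fun a => {a} ×ˢ Finset.Ico (l a) (m a) := by
    ext ⟨a, b⟩
    simp [hs]
  rw [this, Finset.card_biUnion]
  · simp
  · intro a _ a' _ haa'
    simp only [Function.onFun, Finset.disjoint_left, Finset.mem_product, Finset.mem_singleton]
    rintro _ ⟨rfl, -⟩ ⟨rfl, -⟩
    exact haa' rfl

theorem sum_range_rowLen_add_one_sub (nu : YoungDiagram) (t : ℕ) :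
    ∑ a ∈ Finset.range t, (nu.rowLen a + 1 - nu.rowLen (a + 1)) =
      t + nu.rowLen 0 - nu.rowLen t := by
  induction t with
  | zero => simp
  | succ t ih =>
    have := nu.rowLen_anti 0 t t.zero_le
    have := nu.rowLen_anti t (t + 1) t.le_succ
    rw [Finset.sum_range_succ, ih]
    omega

section AddRimHook

variable {nu : YoungDiagram} {n t : ℕ}

/-- The hook starts at `(t, ν_t)` and occupies the `n` diagonals `ν_t - t, …, ν_t - t + n - 1`;
the last of them fixes where row `0` ends. -/
def rimHookRow (nu : YoungDiagram) (n t : ℕ) : ℕ → ℕ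
  | 0 => nu.rowLen t + (n - t)
  | a + 1 => nu.rowLen a + 1

theorem rimHookRow_antitone (h : nu.rowLen 0 + t < n) : Antitone (rimHookRow nu n t) := by
  refine antitone_nat_of_succ_le fun a => ?_
  cases a with
  | zero => simp only [rimHookRow]; omega
  | succ a => exact Nat.add_le_add_right (nu.rowLen_anti a (a + 1) a.le_succ) 1

theorem rowLen_lt_rimHookRow (h : nu.rowLen 0 + t < n) {a : ℕ} (ha : a ≤ t) :
    nu.rowLen a < rimHookRow nu n t a := by
  cases a with
  | zero => have := nu.rowLen_anti 0 t ha; simp only [rimHookRow]; omega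
  | succ a => exact Nat.lt_succ_of_le (nu.rowLen_anti a (a + 1) a.le_succ)

def addRimHook (nu : YoungDiagram) (n t : ℕ) (h : nu.rowLen 0 + t < n) : YoungDiagram :=
  nu ⊔ ofAntitone (t + 1) (rimHookRow nu n t) (rimHookRow_antitone h)

variable (h : nu.rowLen 0 + t < n)

theorem mem_addRimHook {a b : ℕ} :
    (a, b) ∈ addRimHook nu n t h ↔ (a, b) ∈ nu ∨ a ≤ t ∧ b < rimHookRow nu n t a := by
  rw [addRimHook, mem_sup, mem_ofAntitone, Nat.lt_succ_iff]

theorem mem_skewCells_addRimHook {a b : ℕ} :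
    (a, b) ∈ skewCells nu (addRimHook nu n t h) ↔
      a ≤ t ∧ nu.rowLen a ≤ b ∧ b < rimHookRow nu n t a := by
  rw [mem_skewCells, mem_addRimHook, mem_iff_lt_rowLen]
  have := rowLen_lt_rimHookRow h (a := a)
  omega

theorem rowLen_mem_skewCells_addRimHook {a : ℕ} (ha : a ≤ t) :
    (a, nu.rowLen a) ∈ skewCells nu (addRimHook nu n t h) :=
  (mem_skewCells_addRimHook h).2 ⟨ha, le_rfl, rowLen_lt_rimHookRow h ha⟩

theorem isConnectedCells_skewCells_addRimHook :
    IsConnectedCells (skewCells nu (addRimHook nu n t h)) := by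
  set s := skewCells nu (addRimHook nu n t h)
  have to_rowLen : ∀ a b, (a, b) ∈ s →
      Relation.ReflTransGen (AdjIn s) (a, b) (a, nu.rowLen a) := by
    intro a b hab
    have hab := (mem_skewCells_addRimHook h).1 hab
    exact reach_of_row_mem hab.2.1 fun j hj hjb =>
      (mem_skewCells_addRimHook h).2 ⟨hab.1, hj, by omega⟩
  have to_bottom : ∀ a ≤ t, Relation.ReflTransGen (AdjIn s) (a, nu.rowLen a) (t, nu.rowLen t) :=
    fun a ha => Nat.decreasingInduction
      (motive := fun a _ => Relation.ReflTransGen (AdjIn s) (a, nu.rowLen a) (t, nu.rowLen t))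
      (fun a ha ih => by
        have below : (a + 1, nu.rowLen a) ∈ s := (mem_skewCells_addRimHook h).2
          ⟨ha, nu.rowLen_anti a (a + 1) a.le_succ, Nat.lt_succ_self _⟩
        refine .head ⟨rowLen_mem_skewCells_addRimHook h ha.le, below, Or.inr ⟨rfl, Or.inr rfl⟩⟩ ?_
        exact (to_rowLen _ _ below).trans ih)
      .refl ha
  exact isConnectedCells_of_forall_reach (t, nu.rowLen t) fun ⟨a, b⟩ hab =>
    (to_rowLen a b hab).trans (to_bottom a ((mem_skewCells_addRimHook h).1 hab).1)

theorem noSquare_skewCells_addRimHook : NoSquare (skewCells nu (addRimHook nu n t h)) := by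
  rintro ⟨i, j, hij, -, -, hij'⟩
  have hij := (mem_skewCells_addRimHook h).1 hij
  have hij' := (mem_skewCells_addRimHook h).1 hij'
  simp only [rimHookRow] at hij'
  omega

theorem isRimHook_addRimHook : IsRimHook nu (addRimHook nu n t h) :=
  ⟨le_sup_left, ⟨_, rowLen_mem_skewCells_addRimHook h le_rfl⟩,
    isConnectedCells_skewCells_addRimHook h, noSquare_skewCells_addRimHook h⟩

theorem skewSize_addRimHook : skewSize nu (addRimHook nu n t h) = n := by
  rw [skewSize, card_eq_sum_of_mem_iff (l := nu.rowLen) (m := rimHookRow nu n t) (T := t + 1)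
    fun a b => by rw [mem_skewCells_addRimHook, Nat.lt_succ_iff],
    Finset.sum_range_succ', rimHookRow]
  simp only [rimHookRow, sum_range_rowLen_add_one_sub]
  have := nu.rowLen_anti 0 t t.zero_le
  omega

theorem sub_lt_rowLen_zero_addRimHook {k : ℕ} (ht : t < k) :
    n - k < (addRimHook nu n t h).rowLen 0 :=
  mem_iff_lt_rowLen.1 ((mem_addRimHook h).2 (Or.inr ⟨t.zero_le, by simp only [rimHookRow]; omega⟩))

theorem le_addRimHook {lam : YoungDiagram} (hsq : NoSquare (skewCells nu lam))
    (hrows : ∀ c ∈ skewCells nu lam, c.1 ≤ t) (hrow0 : lam.rowLen 0 ≤ nu.rowLen t + (n - t)) :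
    lam ≤ addRimHook nu n t h := by
  rintro ⟨a, b⟩ hab
  rw [mem_addRimHook]
  by_cases hnu : (a, b) ∈ nu
  · exact Or.inl hnu
  refine Or.inr ⟨hrows _ (mem_skewCells.2 ⟨hab, hnu⟩), ?_⟩
  rw [mem_iff_lt_rowLen] at hab
  cases a with
  | zero => exact hab.trans_le hrow0
  | succ a => exact hab.trans_le (rowLen_succ_le_of_noSquare hsq a)

end AddRimHook

theorem add_n_rim_hook_general (k n r : ℕ) (hkn : k < n) :
    (∀ nu : YoungDiagram, nu ≤ box k n → ∀ i : ℕ, i < k →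
      ∃ mu : YoungDiagram, IsRimHook nu mu ∧ skewSize nu mu = n ∧
        (∃ c ∈ skewCells nu mu, i ≤ c.1) ∧ n - k < mu.rowLen 0) ∧
    (∀ lam : YoungDiagram, lam ≤ box k n → ∀ nu : YoungDiagram,
      IsRimHook nu lam → skewSize nu lam = n - r →
      ∃ mu : YoungDiagram, IsRimHook nu mu ∧ skewSize nu mu = n ∧ lam ≤ mu ∧
        skewCells nu lam ⊆ skewCells nu mu ∧ n - k < mu.rowLen 0) := by
  constructor
  · intro nu hnu i hi
    have h : nu.rowLen 0 + i < n := by have := rowLen_le_of_le_box hnu 0; omega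
    refine ⟨addRimHook nu n i h, isRimHook_addRimHook h, skewSize_addRimHook h,
      ⟨_, rowLen_mem_skewCells_addRimHook h le_rfl, le_rfl⟩,
      sub_lt_rowLen_zero_addRimHook h hi⟩
  · rintro lam hlam nu ⟨hle, hne, -, hsq⟩ -
    obtain ⟨c, hc, hlowest⟩ := Finset.exists_max_image _ Prod.fst hne
    have hck : c.1 < k := (mem_box.1 (hlam (mem_skewCells.1 hc).1)).1
    have hlam0 := rowLen_le_of_le_box hlam 0
    have h : nu.rowLen 0 + c.1 < n := by
      have := rowLen_le_of_le_box (hle.trans hlam) 0; omega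
    have hlam_le := le_addRimHook h hsq hlowest (by omega)
    exact ⟨addRimHook nu n c.1 h, isRimHook_addRimHook h, skewSize_addRimHook h, hlam_le,
      skewCells_subset_skewCells hlam_le, sub_lt_rowLen_zero_addRimHook h hck⟩

/-- to any `ν ⊆ Box_{k,n}` one can add a rim hook of size `n` whose
Southwestern-most box lies weakly below any given row `i ≤ k`, producing `μ` with
`μ₁ > n - k`; in particular every rim hook of size `n-r` removed from `λ ⊆ Box_{k,n}`
extends rightward to a rim hook of size `n`. -/
theorem add_n_rim_hook (k n r : ℕ) (hk : 0 < k) (hkn : k < n) (hr : 0 < r) (hrn : r < n) :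
    (∀ nu : YoungDiagram, nu ≤ box k n → ∀ i : ℕ, i < k →
      ∃ mu : YoungDiagram, IsRimHook nu mu ∧ skewSize nu mu = n ∧
        (∃ c ∈ skewCells nu mu, i ≤ c.1) ∧ n - k < mu.rowLen 0) ∧
    (∀ lam : YoungDiagram, lam ≤ box k n → ∀ nu : YoungDiagram,
      IsRimHook nu lam → skewSize nu lam = n - r →
      ∃ mu : YoungDiagram, IsRimHook nu mu ∧ skewSize nu mu = n ∧ lam ≤ mu ∧
        skewCells nu lam ⊆ skewCells nu mu ∧ n - k < mu.rowLen 0) :=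
  add_n_rim_hook_general k n r hkn
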